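/- Let X be a finite set with |X| = r where r ≥ 3, and fix x ∈ X. Define e₀ = (r/(r−1))·(E₀ + E₀* − E₀E₀* − E₀*E₀) and e₁ = I − e₀. Then e₀ and e₁ belong to the subconstituent algebra T, they commute with every element of T, they are linearly independent over ℂ, and every element of T that commutes with all elements of T is a ℂ-linear combination of e₀ and e₁; that is, e₀, e₁ form a basis for the center Z(T) of T. -/

import Mathlib

/-- The all-ones matrix `J` on index set `X`. -/
def Jmat (X : Type*) : Matrix X X ℂ := Matrix.of fun _ _ => 1

/-- The 0-th primitive idempotent `E₀ = r⁻¹ J` of the complete graph `K_r`. -/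
noncomputable def E0 (X : Type*) (r : ℕ) : Matrix X X ℂ := (r : ℂ)⁻¹ • Jmat X

/-- The 0-th dual idempotent `E₀*` with respect to the base vertex `x`. -/
def E0s (X : Type*) [DecidableEq X] (x : X) : Matrix X X ℂ :=
  Matrix.diagonal fun y => if y = x then 1 else 0

/-- The adjacency matrix `A = J - I` of the complete graph `K_r`. -/
def Amat (X : Type*) [DecidableEq X] : Matrix X X ℂ := Jmat X - 1

/-- The dual adjacency matrix `A* = r E₀* - I` of `K_r` with respect to `x`. -/
def AmatStar (X : Type*) [DecidableEq X] (r : ℕ) (x : X) : Matrix X X ℂ :=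
  (r : ℂ) • E0s X x - 1

/-- `e₀ = (r/(r−1))·(E₀ + E₀* − E₀E₀* − E₀*E₀)`. -/
noncomputable def e0 (X : Type*) [Fintype X] [DecidableEq X] (r : ℕ) (x : X) : Matrix X X ℂ :=
  ((r : ℂ) / ((r : ℂ) - 1)) • (E0 X r + E0s X x - E0 X r * E0s X x - E0s X x * E0 X r)

/-- `e₁ = I − e₀`. -/
noncomputable def e1 (X : Type*) [Fintype X] [DecidableEq X] (r : ℕ) (x : X) : Matrix X X ℂ :=
  1 - e0 X r x

/-
Write `J` for the all-ones matrix and `D` for `E₀*`. They satisfy `J² = rJ`, `D² = D`,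
`JDJ = J` and `DJD = D`, so `T` is spanned by `I, J, D, JD, DJ`, and
`e₀ = (r - 1)⁻¹ (J + rD - JD - DJ)` acts as the identity on `J` and `D` from both sides.
Hence `e₀` is a central idempotent of `T`; its trace is `2`, so for `r ≥ 3` it is neither `0`
nor `I`, which makes `e₀, e₁ = I - e₀` independent.
Conversely, write a central `C` as `c₀I + c₁J + c₂D + c₃JD + c₄DJ`. Commuting with `D` kills
the entries `C(x,y)` and `C(y,x)` for `y ≠ x`, giving `c₃ = c₄ = -c₁`; the `(y,x)` entry of
`CJ = JC` then gives `c₂ = rc₁`, so `C = (c₀ + (r - 1)c₁) e₀ + c₀ e₁`.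
-/

theorem IsIdempotentElem.linearIndependent_one_sub {K A : Type*} [Field K] [Ring A]
    [Algebra K A] {e : A} (he : IsIdempotentElem e) (h0 : e ≠ 0) (h1 : e ≠ 1) :
    LinearIndependent K ![e, 1 - e] := by
  refine LinearIndependent.pair_iff.2 fun s t hst => ?_
  have hs : s • e = 0 := by
    simpa [mul_add, mul_sub, he.eq] using congrArg (e * ·) hst
  obtain rfl : s = 0 := (smul_eq_zero.1 hs).resolve_right h0
  exact ⟨rfl, (smul_eq_zero.1 (by simpa using hst)).resolve_right (sub_ne_zero.2 h1.symm)⟩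

theorem Algebra.toSubmodule_adjoin_le_span_of_mul_mem {R A : Type*} [CommSemiring R]
    [Semiring A] [Algebra R A] {s t : Set A} (h1 : 1 ∈ Submodule.span R t)
    (hmul : ∀ a ∈ s, ∀ b ∈ t, a * b ∈ Submodule.span R t) :
    Subalgebra.toSubmodule (Algebra.adjoin R s) ≤ Submodule.span R t := by
  have hleft : ∀ a ∈ s, ∀ w ∈ Submodule.span R t, a * w ∈ Submodule.span R t := by
    intro a ha w hw
    induction hw using Submodule.span_induction with
    | mem b hb => exact hmul a ha b hb
    | zero => simp
    | add u v _ _ hu hv => rw [mul_add]; exact add_mem hu hv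
    | smul c u _ hu => rw [mul_smul_comm]; exact Submodule.smul_mem _ c hu
  intro m hm
  suffices ∀ w ∈ Submodule.span R t, m * w ∈ Submodule.span R t from mul_one m ▸ this 1 h1
  induction hm using Algebra.adjoin_induction with
  | mem a ha => exact hleft a ha
  | algebraMap c => intro w hw; rw [← Algebra.smul_def]; exact Submodule.smul_mem _ c hw
  | add u v _ _ hu hv => intro w hw; rw [add_mul]; exact add_mem (hu w hw) (hv w hw)
  | mul u v _ _ hu hv => intro w hw; rw [mul_assoc]; exact hu _ (hv w hw)

theorem natCast_card_sub_one_ne_zero {X : Type*} [Fintype X] (hX : 1 < Fintype.card X) :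
    (Fintype.card X : ℂ) - 1 ≠ 0 :=
  sub_ne_zero.2 (by exact_mod_cast hX.ne')

section CompleteGraph

variable {X : Type*} [Fintype X] [DecidableEq X] {x : X}

omit [Fintype X] [DecidableEq X] in
@[simp] theorem Jmat_apply (y z : X) : Jmat X y z = 1 := rfl

omit [Fintype X] in
theorem E0s_apply (y z : X) : E0s X x y z = if y = x ∧ z = x then 1 else 0 := by
  simp only [E0s, Matrix.diagonal_apply]
  grind

@[simp] theorem Jmat_mul_E0s_apply (y z : X) :
    (Jmat X * E0s X x) y z = if z = x then 1 else 0 := by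
  simp [E0s]

@[simp] theorem E0s_mul_Jmat_apply (y z : X) :
    (E0s X x * Jmat X) y z = if y = x then 1 else 0 := by
  simp [E0s]

omit [DecidableEq X] in
theorem Jmat_mul_Jmat : Jmat X * Jmat X = (Fintype.card X : ℂ) • Jmat X := by
  ext y z
  simp [Matrix.mul_apply]

theorem E0s_mul_E0s : E0s X x * E0s X x = E0s X x := by
  simp [E0s]

theorem Jmat_mul_E0s_mul_Jmat : Jmat X * E0s X x * Jmat X = Jmat X := by
  rw [Matrix.mul_assoc]
  ext y z
  rw [Matrix.mul_apply]
  simp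

theorem E0s_mul_Jmat_mul_E0s : E0s X x * Jmat X * E0s X x = E0s X x := by
  rw [Matrix.mul_assoc]
  ext y z
  rw [Matrix.mul_apply]
  by_cases hy : y = x <;> simp [E0s_apply, hy]

omit [DecidableEq X] in
@[simp] theorem trace_Jmat : (Jmat X).trace = Fintype.card X := by
  simp [Matrix.trace]

@[simp] theorem trace_E0s : (E0s X x).trace = 1 := by
  simp [Matrix.trace, E0s_apply]

@[simp] theorem trace_Jmat_mul_E0s : (Jmat X * E0s X x).trace = 1 := by
  simp [Matrix.trace]

@[simp] theorem trace_E0s_mul_Jmat : (E0s X x * Jmat X).trace = 1 := by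
  simp [Matrix.trace]

theorem e0_eq_smul {r : ℕ} (hr : r ≠ 0) : e0 X r x =
    ((r : ℂ) - 1)⁻¹ • (Jmat X + (r : ℂ) • E0s X x - Jmat X * E0s X x - E0s X x * Jmat X) := by
  have : (r : ℂ) ≠ 0 := by exact_mod_cast hr
  rw [e0, E0, Matrix.smul_mul, Matrix.mul_smul]
  match_scalars <;> field_simp

theorem e0_mem_adjoin {r : ℕ} (hr : r ≠ 0) : e0 X r x ∈ Algebra.adjoin ℂ {Jmat X, E0s X x} := by
  have hJ : Jmat X ∈ Algebra.adjoin ℂ {Jmat X, E0s X x} := Algebra.subset_adjoin (by simp)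
  have hD : E0s X x ∈ Algebra.adjoin ℂ {Jmat X, E0s X x} := Algebra.subset_adjoin (by simp)
  rw [e0_eq_smul hr]
  exact Subalgebra.smul_mem _ (sub_mem (sub_mem (add_mem hJ (Subalgebra.smul_mem _ hD _))
    (mul_mem hJ hD)) (mul_mem hD hJ)) _

theorem adjoin_Amat_AmatStar {r : ℕ} (hr : r ≠ 0) :
    Algebra.adjoin ℂ {Amat X, AmatStar X r x} = Algebra.adjoin ℂ {Jmat X, E0s X x} := by
  have hJ : Jmat X = Amat X + 1 := (sub_add_cancel _ _).symm
  have hD : E0s X x = (r : ℂ)⁻¹ • (AmatStar X r x + 1) := by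
    rw [AmatStar, sub_add_cancel, inv_smul_smul₀ (by exact_mod_cast hr)]
  apply le_antisymm <;> rw [Algebra.adjoin_le_iff, Set.pair_subset_iff]
  · exact ⟨sub_mem (Algebra.subset_adjoin (by simp)) (one_mem _),
      sub_mem (Subalgebra.smul_mem _ (Algebra.subset_adjoin (by simp)) _) (one_mem _)⟩
  · refine ⟨hJ ▸ add_mem (Algebra.subset_adjoin (by simp)) (one_mem _), hD ▸ ?_⟩
    exact Subalgebra.smul_mem _ (add_mem (Algebra.subset_adjoin (by simp)) (one_mem _)) _

theorem toSubmodule_adjoin_Jmat_E0s_le_span :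
    Subalgebra.toSubmodule (Algebra.adjoin ℂ {Jmat X, E0s X x}) ≤
      Submodule.span ℂ (Set.range ![1, Jmat X, E0s X x, Jmat X * E0s X x, E0s X x * Jmat X]) := by
  refine Algebra.toSubmodule_adjoin_le_span_of_mul_mem (Submodule.subset_span (by simp)) ?_
  rintro a (rfl | rfl) _ ⟨i, rfl⟩ <;> fin_cases i <;>
    simp [← mul_assoc, Jmat_mul_Jmat, E0s_mul_E0s, Jmat_mul_E0s_mul_Jmat, E0s_mul_Jmat_mul_E0s] <;>
    first
      | (apply Submodule.subset_span; simp; done)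
      | (apply Submodule.smul_mem; apply Submodule.subset_span; simp)

section OneLtCard

variable (hX : 1 < Fintype.card X)
include hX

theorem e0_mul_Jmat : e0 X (Fintype.card X) x * Jmat X = Jmat X := by
  rw [e0_eq_smul (by omega), smul_mul_assoc]
  convert inv_smul_smul₀ (natCast_card_sub_one_ne_zero hX) (Jmat X) using 2
  simp only [sub_mul, add_mul, smul_mul_assoc, mul_smul_comm,
    mul_assoc (E0s X x) (Jmat X) (Jmat X), Jmat_mul_Jmat, Jmat_mul_E0s_mul_Jmat]
  module

theorem Jmat_mul_e0 : Jmat X * e0 X (Fintype.card X) x = Jmat X := by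
  rw [e0_eq_smul (by omega), mul_smul_comm]
  convert inv_smul_smul₀ (natCast_card_sub_one_ne_zero hX) (Jmat X) using 2
  simp only [mul_sub, mul_add, smul_mul_assoc, mul_smul_comm, ← mul_assoc, Jmat_mul_Jmat,
    Jmat_mul_E0s_mul_Jmat]
  module

theorem e0_mul_E0s : e0 X (Fintype.card X) x * E0s X x = E0s X x := by
  rw [e0_eq_smul (by omega), smul_mul_assoc]
  convert inv_smul_smul₀ (natCast_card_sub_one_ne_zero hX) (E0s X x) using 2
  simp only [sub_mul, add_mul, smul_mul_assoc, mul_assoc (Jmat X) (E0s X x) (E0s X x),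
    E0s_mul_E0s, E0s_mul_Jmat_mul_E0s]
  module

theorem E0s_mul_e0 : E0s X x * e0 X (Fintype.card X) x = E0s X x := by
  rw [e0_eq_smul (by omega), mul_smul_comm]
  convert inv_smul_smul₀ (natCast_card_sub_one_ne_zero hX) (E0s X x) using 2
  simp only [mul_sub, mul_add, mul_smul_comm, ← mul_assoc, E0s_mul_E0s, E0s_mul_Jmat_mul_E0s]
  module

theorem commute_e0_of_mem_adjoin {B : Matrix X X ℂ}
    (hB : B ∈ Algebra.adjoin ℂ {Jmat X, E0s X x}) : Commute (e0 X (Fintype.card X) x) B := by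
  refine Algebra.commute_of_mem_adjoin_of_forall_mem_commute hB ?_
  rintro _ (rfl | rfl)
  · exact (e0_mul_Jmat hX).trans (Jmat_mul_e0 hX).symm
  · exact (e0_mul_E0s hX).trans (E0s_mul_e0 hX).symm

theorem isIdempotentElem_e0 : IsIdempotentElem (e0 X (Fintype.card X) x) := by
  rw [IsIdempotentElem]
  nth_rw 2 [e0_eq_smul (by omega)]
  rw [mul_smul_comm, mul_sub, mul_sub, mul_add, mul_smul_comm, ← mul_assoc, ← mul_assoc,
    e0_mul_Jmat hX, e0_mul_E0s hX, ← e0_eq_smul (by omega)]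

theorem trace_e0 : (e0 X (Fintype.card X) x).trace = 2 := by
  rw [e0_eq_smul (by omega)]
  simp only [Matrix.trace_smul, Matrix.trace_sub, Matrix.trace_add, trace_Jmat, trace_E0s,
    trace_Jmat_mul_E0s, trace_E0s_mul_Jmat, smul_eq_mul]
  field_simp [natCast_card_sub_one_ne_zero hX]
  ring

theorem e0_ne_zero : e0 X (Fintype.card X) x ≠ 0 := by
  intro h
  simpa [h] using trace_e0 (x := x) hX

end OneLtCard

theorem e0_ne_one (hX : 2 < Fintype.card X) : e0 X (Fintype.card X) x ≠ 1 := by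
  intro h
  have htrace := trace_e0 (x := x) (by omega : 1 < Fintype.card X)
  rw [h, Matrix.trace_one] at htrace
  have : Fintype.card X = 2 := by exact_mod_cast htrace
  omega

theorem apply_eq_zero_of_commute_E0s {C : Matrix X X ℂ} (hC : Commute C (E0s X x)) {y : X}
    (hy : y ≠ x) : C x y = 0 ∧ C y x = 0 := by
  have hxy := congrFun (congrFun hC.eq x) y
  have hyx := congrFun (congrFun hC.eq y) x
  simp only [E0s, Matrix.mul_diagonal, Matrix.diagonal_mul, hy, if_true, if_false, mul_zero,
    zero_mul, mul_one, one_mul] at hxy hyx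
  exact ⟨hxy.symm, hyx⟩

theorem exists_eq_smul_e0_add_smul_e1_of_commute (hX : 1 < Fintype.card X) {C : Matrix X X ℂ}
    (hC : C ∈ Algebra.adjoin ℂ {Jmat X, E0s X x}) (hCJ : Commute C (Jmat X))
    (hCD : Commute C (E0s X x)) :
    ∃ a b : ℂ, C = a • e0 X (Fintype.card X) x + b • e1 X (Fintype.card X) x := by
  obtain ⟨y, hy⟩ := Fintype.exists_ne_of_one_lt_card hX x
  obtain ⟨c, rfl⟩ :=
    (Submodule.mem_span_range_iff_exists_fun ℂ).1 (toSubmodule_adjoin_Jmat_E0s_le_span hC)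
  simp only [Fin.sum_univ_five, Matrix.cons_val] at hCJ hCD ⊢
  obtain ⟨hxy, hyx⟩ := apply_eq_zero_of_commute_E0s hCD hy
  simp only [Matrix.add_apply, Matrix.smul_apply, Matrix.one_apply_ne hy,
    Matrix.one_apply_ne hy.symm, Jmat_apply, E0s_apply, Jmat_mul_E0s_apply, E0s_mul_Jmat_apply,
    hy, and_false, and_true, if_true, if_false, smul_eq_mul, mul_zero, mul_one, zero_add,
    add_zero] at hxy hyx
  have hJ := congrFun (congrFun hCJ.eq y) x
  simp only [add_mul, mul_add, smul_mul_assoc, mul_smul_comm, one_mul, mul_one,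
    mul_assoc (E0s X x) (Jmat X) (Jmat X), ← mul_assoc (Jmat X) (Jmat X),
    ← mul_assoc (Jmat X) (E0s X x) (Jmat X), Jmat_mul_Jmat, Jmat_mul_E0s_mul_Jmat] at hJ
  simp only [Matrix.add_apply, Matrix.smul_apply, Jmat_apply, Jmat_mul_E0s_apply,
    E0s_mul_Jmat_apply, hy, if_true, if_false, smul_eq_mul, mul_zero, mul_one, add_zero] at hJ
  have hc3 : c 3 = -c 1 := by linear_combination hyx
  have hc4 : c 4 = -c 1 := by linear_combination hxy
  have hc2 : c 2 = Fintype.card X * c 1 := by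
    linear_combination -hJ - (Fintype.card X - 1 : ℂ) * hyx - hxy
  refine ⟨c 0 + (Fintype.card X - 1) * c 1, c 0, ?_⟩
  have := natCast_card_sub_one_ne_zero hX
  rw [e1, e0_eq_smul (by omega), hc2, hc3, hc4]
  match_scalars <;> field_simp <;> ring

end CompleteGraph

theorem stmt9 (X : Type*) [Fintype X] [DecidableEq X] (r : ℕ) (hr : 3 ≤ r)
    (hcard : Fintype.card X = r) (x : X) :
    e0 X r x ∈ Algebra.adjoin ℂ ({Amat X, AmatStar X r x} : Set (Matrix X X ℂ)) ∧
    e1 X r x ∈ Algebra.adjoin ℂ ({Amat X, AmatStar X r x} : Set (Matrix X X ℂ)) ∧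
    (∀ B ∈ Algebra.adjoin ℂ ({Amat X, AmatStar X r x} : Set (Matrix X X ℂ)),
      e0 X r x * B = B * e0 X r x) ∧
    (∀ B ∈ Algebra.adjoin ℂ ({Amat X, AmatStar X r x} : Set (Matrix X X ℂ)),
      e1 X r x * B = B * e1 X r x) ∧
    LinearIndependent ℂ ![e0 X r x, e1 X r x] ∧
    (∀ C ∈ Algebra.adjoin ℂ ({Amat X, AmatStar X r x} : Set (Matrix X X ℂ)),
      (∀ B ∈ Algebra.adjoin ℂ ({Amat X, AmatStar X r x} : Set (Matrix X X ℂ)),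
        C * B = B * C) →
      ∃ a b : ℂ, C = a • e0 X r x + b • e1 X r x) := by
  subst hcard
  have hX : 1 < Fintype.card X := by omega
  rw [adjoin_Amat_AmatStar (by omega)]
  have hcomm (B) (hB : B ∈ Algebra.adjoin ℂ {Jmat X, E0s X x}) := commute_e0_of_mem_adjoin hX hB
  refine ⟨e0_mem_adjoin (by omega), sub_mem (one_mem _) (e0_mem_adjoin (by omega)), hcomm,
    fun B hB => (Commute.one_left B).sub_left (hcomm B hB), ?_, fun C hC hCT => ?_⟩
  · exact (isIdempotentElem_e0 hX).linearIndependent_one_sub (e0_ne_zero hX) (e0_ne_one hr)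
  · exact exists_eq_smul_e0_add_smul_e1_of_commute hX hC
      (hCT _ (Algebra.subset_adjoin (by simp))) (hCT _ (Algebra.subset_adjoin (by simp)))
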